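/- Let F be a field and n ≥ 1. For all g, h ∈ Sp_{2n}(F) one has Pl(g) = Pl(h) if and only if g·h⁻¹ ∈ [P,P](F). Equivalently (Lemma 2.2), the Plücker map Pl is injective on X(F) = [P,P](F)\Sp_{2n}(F) as a map into ⋀ⁿF^{2n} ∖ {0}. -/
import Mathlib


open Matrix

/-- The standard symplectic structure matrix `J = (0, Iₙ; -Iₙ, 0)`, with index set
`Fin n ⊕ Fin n` (the first copy of `Fin n` giving indices `1, …, n` and the second copy
giving `n+1, …, 2n`). -/
def Jmat (F : Type*) [Field F] (n : ℕ) : Matrix (Fin n ⊕ Fin n) (Fin n ⊕ Fin n) F :=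
  Matrix.fromBlocks 0 1 (-1) 0

/-- `Sp_{2n}(F) = {g : g * J⁻¹ * gᵀ * J = 1}`. -/
def Sp (F : Type*) [Field F] (n : ℕ) : Set (Matrix (Fin n ⊕ Fin n) (Fin n ⊕ Fin n) F) :=
  {g | g * (Jmat F n)⁻¹ * gᵀ * Jmat F n = 1}

/-- `[P,P](F)`: elements of `Sp_{2n}(F)` of block form `(A, B; 0, (Aᵀ)⁻¹)` with `det A = 1`. -/
def SiegelPP (F : Type*) [Field F] (n : ℕ) :
    Set (Matrix (Fin n ⊕ Fin n) (Fin n ⊕ Fin n) F) :=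
  {g | g ∈ Sp F n ∧ ∃ A B : Matrix (Fin n) (Fin n) F,
    g = Matrix.fromBlocks A B 0 Aᵀ⁻¹ ∧ A.det = 1}

/-- The Plücker map: the wedge product (in the `n`-th exterior power of the space of row
vectors `F^{2n}`) of the last `n` rows of `g`, from top to bottom. -/
noncomputable def Pl (F : Type*) [Field F] (n : ℕ)
    (g : Matrix (Fin n ⊕ Fin n) (Fin n ⊕ Fin n) F) :
    ExteriorAlgebra F ((Fin n ⊕ Fin n) → F) :=
  ExteriorAlgebra.ιMulti F n (fun i => g (Sum.inr i))

open Matrix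

noncomputable def coefMap (F : Type*) [Field F] (n : ℕ) (σ : Fin n → Fin n ⊕ Fin n) :
    ExteriorAlgebra F ((Fin n ⊕ Fin n) → F) →ₗ[F] F :=
  ExteriorAlgebra.liftAlternating
    (Function.update (fun i => (0 : ((Fin n ⊕ Fin n) → F) [⋀^Fin i]→ₗ[F] F)) n
      ((Matrix.detRowAlternating).compLinearMap (LinearMap.funLeft F F σ)))

theorem coefMap_ιMulti (F : Type*) [Field F] (n : ℕ) (σ : Fin n → Fin n ⊕ Fin n)
    (v : Fin n → (Fin n ⊕ Fin n) → F) :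
    coefMap F n σ (ExteriorAlgebra.ιMulti F n v)
      = Matrix.det (Matrix.of fun i j => v i (σ j)) := by
  rw [coefMap, ExteriorAlgebra.liftAlternating_apply_ιMulti, Function.update_self]
  rfl

section J
variable (F : Type*) [Field F] (n : ℕ)

theorem J_mul_J' : Jmat F n * Matrix.fromBlocks 0 (-1) 1 0 = 1 := by
  rw [Jmat, Matrix.fromBlocks_multiply]
  simp [Matrix.fromBlocks_one]

theorem J'_mul_J : (Matrix.fromBlocks 0 (-1) 1 0 : Matrix (Fin n ⊕ Fin n) _ F) * Jmat F n = 1 := by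
  rw [Jmat, Matrix.fromBlocks_multiply]
  simp [Matrix.fromBlocks_one]

theorem Jinv : (Jmat F n)⁻¹ = Matrix.fromBlocks 0 (-1) 1 0 :=
  Matrix.inv_eq_right_inv (J_mul_J' F n)

variable {F n} {g h : Matrix (Fin n ⊕ Fin n) (Fin n ⊕ Fin n) F}

theorem sp_iff' : g ∈ Sp F n ↔ g * (Jmat F n)⁻¹ * gᵀ = (Jmat F n)⁻¹ := by
  constructor
  · intro hg
    have h1 : g * (Jmat F n)⁻¹ * gᵀ * Jmat F n * (Jmat F n)⁻¹ = 1 * (Jmat F n)⁻¹ := by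
      rw [hg]
    rw [Matrix.mul_assoc (g * (Jmat F n)⁻¹ * gᵀ), Jinv, J_mul_J', Matrix.mul_one, one_mul]
      at h1
    rw [Jinv]
    exact h1
  · intro hg
    show g * (Jmat F n)⁻¹ * gᵀ * Jmat F n = 1
    rw [hg, Jinv, J'_mul_J]

theorem sp_isUnit_det (hg : g ∈ Sp F n) : IsUnit g.det := by
  apply Matrix.isUnit_det_of_right_inverse (B := (Jmat F n)⁻¹ * gᵀ * Jmat F n)
  rw [← Matrix.mul_assoc, ← Matrix.mul_assoc]
  exact hg

theorem sp_mul_inv_mem (hg : g ∈ Sp F n) (hh : h ∈ Sp F n) : g * h⁻¹ ∈ Sp F n := by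
  have hhu : IsUnit h.det := sp_isUnit_det hh
  rw [sp_iff'] at hg hh ⊢
  have hinv : h⁻¹ * (Jmat F n)⁻¹ * (h⁻¹)ᵀ = (Jmat F n)⁻¹ := by
    rw [Matrix.transpose_nonsing_inv]
    calc h⁻¹ * (Jmat F n)⁻¹ * (hᵀ)⁻¹
        = h⁻¹ * (h * (Jmat F n)⁻¹ * hᵀ) * (hᵀ)⁻¹ := by rw [hh]
      _ = (h⁻¹ * h) * (Jmat F n)⁻¹ * (hᵀ * (hᵀ)⁻¹) := by
          simp only [Matrix.mul_assoc]
      _ = (Jmat F n)⁻¹ := by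
          rw [Matrix.nonsing_inv_mul h hhu,
            Matrix.mul_nonsing_inv hᵀ (by rwa [Matrix.det_transpose]), one_mul,
            Matrix.mul_one]
  calc g * h⁻¹ * (Jmat F n)⁻¹ * (g * h⁻¹)ᵀ
      = g * (h⁻¹ * (Jmat F n)⁻¹ * (h⁻¹)ᵀ) * gᵀ := by
        rw [Matrix.transpose_mul]; simp only [Matrix.mul_assoc]
    _ = (Jmat F n)⁻¹ := by rw [hinv]; exact hg

end J

/-- An alternating map applied to a matrix combination of vectors picks up a determinant. -/
theorem AlternatingMap.map_matrix_smul {F : Type*} [Field F] {M N : Type*}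
    [AddCommGroup M] [Module F M] [AddCommGroup N] [Module F N] {n : ℕ}
    (f : M [⋀^Fin n]→ₗ[F] N) (A : Matrix (Fin n) (Fin n) F) (v : Fin n → M) :
    f (fun i => ∑ j, A i j • v j) = A.det • f v := by
  classical
  have h1 : f (fun i => ∑ j, A i j • v j)
      = ∑ r : Fin n → Fin n, f fun i => A i (r i) • v (r i) :=
    f.toMultilinearMap.map_sum (g := fun i j => A i j • v j)
  have h2 : ∀ r : Fin n → Fin n,
      (f fun i => A i (r i) • v (r i)) = (∏ i, A i (r i)) • f (v ∘ r) := by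
    intro r
    exact f.toMultilinearMap.map_smul_univ (fun i => A i (r i)) (fun i => v (r i))
  rw [h1]
  simp_rw [h2]
  rw [← Finset.sum_filter_add_sum_filter_not Finset.univ (fun r => Function.Bijective r)]
  have hz : ∀ r ∈ Finset.univ.filter (fun r : Fin n → Fin n => ¬ Function.Bijective r),
      (∏ i, A i (r i)) • f (v ∘ r) = 0 := by
    intro r hr
    rw [Finset.mem_filter] at hr
    have hninj : ¬ Function.Injective r := fun hinj => hr.2 (Finite.injective_iff_bijective.mp hinj)
    rw [Function.Injective] at hninj
    push_neg at hninj
    obtain ⟨i, j, hij, hne⟩ := hninj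
    rw [f.map_eq_zero_of_eq (v ∘ r) (by simp [Function.comp, hij]) hne, smul_zero]
  rw [Finset.sum_eq_zero hz, add_zero]
  have h3 : ∑ r ∈ Finset.univ.filter (fun r : Fin n → Fin n => Function.Bijective r),
      (∏ i, A i (r i)) • f (v ∘ r)
      = ∑ σ : Equiv.Perm (Fin n), (∏ i, A i (σ i)) • f (v ∘ σ) := by
    refine (Finset.sum_bij (fun p h => Equiv.ofBijective p (Finset.mem_filter.1 h).2)
      (fun _ _ => Finset.mem_univ _) (fun _ _ _ _ hEq => by injection hEq)
      (fun b _ => ⟨b, Finset.mem_filter.2 ⟨Finset.mem_univ _, b.bijective⟩,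
        Equiv.coe_fn_injective rfl⟩) fun _ _ => rfl)
  rw [h3]
  have h4 : ∀ σ : Equiv.Perm (Fin n),
      (∏ i, A i (σ i)) • f (v ∘ σ)
        = ((((Equiv.Perm.sign σ : ℤ) : F)) * ∏ i, A i (σ i)) • f v := by
    intro σ
    rw [f.map_perm v σ, smul_comm]
    rw [Units.smul_def, ← Int.cast_smul_eq_zsmul F, ← smul_assoc]
    simp [smul_eq_mul, mul_comm]
  simp_rw [h4, ← Finset.sum_smul]
  congr 1
  rw [← Matrix.det_transpose, Matrix.det_apply']
  simp [Matrix.transpose_apply]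

/-- For `g, h ∈ Sp_{2n}(F)`, `Pl(g) = Pl(h)` iff `g h⁻¹ ∈ [P,P](F)`; equivalently, the
Plücker map is injective on `X(F) = [P,P](F)\Sp_{2n}(F)`. -/
theorem pl_eq_iff_mul_inv_mem (F : Type*) [Field F] (n : ℕ) (hn : 1 ≤ n)
    (g h : Matrix (Fin n ⊕ Fin n) (Fin n ⊕ Fin n) F)
    (hg : g ∈ Sp F n) (hh : h ∈ Sp F n) :
    Pl F n g = Pl F n h ↔ g * h⁻¹ ∈ SiegelPP F n := by
  classical
  have hhu : IsUnit h.det := sp_isUnit_det hh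
  have hkh : g * h⁻¹ * h = g := by
    rw [Matrix.mul_assoc, Matrix.nonsing_inv_mul h hhu, Matrix.mul_one]
  constructor
  · intro hpl
    simp only [Pl] at hpl
    set k := g * h⁻¹ with hkdef
    have hmap := congrArg (ExteriorAlgebra.map (Matrix.vecMulLinear h⁻¹)) hpl
    rw [ExteriorAlgebra.map_apply_ιMulti, ExteriorAlgebra.map_apply_ιMulti] at hmap
    have hrowk : (⇑(Matrix.vecMulLinear h⁻¹)) ∘ (fun i => g (Sum.inr i))
        = fun i => k (Sum.inr i) := by
      funext i j
      simp [Matrix.vecMul, dotProduct, Matrix.mul_apply, hkdef]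
    have hrow1 : (⇑(Matrix.vecMulLinear h⁻¹)) ∘ (fun i => h (Sum.inr i))
        = fun i => (1 : Matrix (Fin n ⊕ Fin n) (Fin n ⊕ Fin n) F) (Sum.inr i) := by
      have h1 : h * h⁻¹ = 1 := Matrix.mul_nonsing_inv h hhu
      funext i j
      have h2 := congrFun (congrFun h1 (Sum.inr i)) j
      simp only [Matrix.mul_apply] at h2
      simpa [Matrix.vecMul, dotProduct] using h2
    rw [hrowk, hrow1] at hmap
    set D : Matrix (Fin n) (Fin n) F := k.toBlocks₂₂ with hD
    have hdetD : D.det = 1 := by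
      have hco := congrArg (coefMap F n Sum.inr) hmap
      rw [coefMap_ιMulti, coefMap_ιMulti] at hco
      have e1 : (Matrix.of fun i j =>
            (1 : Matrix (Fin n ⊕ Fin n) (Fin n ⊕ Fin n) F) (Sum.inr i) (Sum.inr j))
          = (1 : Matrix (Fin n) (Fin n) F) := by
        ext i j
        by_cases hij : i = j <;> simp [Matrix.one_apply, hij]
      rw [e1, Matrix.det_one] at hco
      exact hco
    have hC : ∀ (j₀ i : Fin n), k (Sum.inr i) (Sum.inl j₀) = 0 := by
      intro j₀
      set c : Fin n → F := fun i => k (Sum.inr i) (Sum.inl j₀) with hc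
      have hcr : Matrix.cramer D c = 0 := by
        funext i₀
        have hco := congrArg
          (coefMap F n (Function.update (Sum.inr : Fin n → Fin n ⊕ Fin n) i₀ (Sum.inl j₀))) hmap
        rw [coefMap_ιMulti, coefMap_ιMulti] at hco
        have e1 : (Matrix.of fun i j => k (Sum.inr i)
              (Function.update (Sum.inr : Fin n → Fin n ⊕ Fin n) i₀ (Sum.inl j₀) j))
            = D.updateCol i₀ c := by
          ext i j
          by_cases hj : j = i₀ <;>
            simp [Matrix.updateCol_apply, Function.update_apply, hj, hD, hc,
              Matrix.toBlocks₂₂]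
        have e2 : Matrix.det (Matrix.of fun i j =>
              (1 : Matrix (Fin n ⊕ Fin n) (Fin n ⊕ Fin n) F) (Sum.inr i)
              (Function.update (Sum.inr : Fin n → Fin n ⊕ Fin n) i₀ (Sum.inl j₀) j)) = 0 := by
          apply Matrix.det_eq_zero_of_column_eq_zero i₀
          intro i
          simp [Matrix.one_apply]
        rw [e1, e2] at hco
        rw [Matrix.cramer_apply, Pi.zero_apply, hco]
      have hmv := Matrix.mulVec_cramer D c
      rw [hcr, Matrix.mulVec_zero, hdetD, one_smul] at hmv
      intro i
      exact (congrFun hmv.symm i)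
    have hkSp : k ∈ Sp F n := sp_mul_inv_mem hg hh
    have hCblk : k.toBlocks₂₁ = 0 := by
      ext i j; exact hC j i
    have hkblocks : k = Matrix.fromBlocks k.toBlocks₁₁ k.toBlocks₁₂ 0 D := by
      conv_lhs => rw [← Matrix.fromBlocks_toBlocks k]
      rw [hCblk]
    set A := k.toBlocks₁₁ with hA
    set B := k.toBlocks₁₂ with hB
    have e_k : k * (Jmat F n)⁻¹ * kᵀ = (Jmat F n)⁻¹ := sp_iff'.mp hkSp
    rw [Jinv] at e_k
    have hDA : D * Aᵀ = 1 := by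
      rw [hkblocks, Matrix.fromBlocks_transpose, Matrix.fromBlocks_multiply,
        Matrix.fromBlocks_multiply] at e_k
      have hblk := congrArg Matrix.toBlocks₂₁ e_k
      simpa using hblk
    have hDU : IsUnit D.det := by rw [hdetD]; exact isUnit_one
    have hAD : Aᵀ⁻¹ = D := by
      rw [← Matrix.inv_eq_right_inv hDA, Matrix.nonsing_inv_nonsing_inv D hDU]
    have hdetA : A.det = 1 := by
      have hdm := congrArg Matrix.det hDA
      rw [Matrix.det_mul, hdetD, one_mul, Matrix.det_one, Matrix.det_transpose] at hdm
      exact hdm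
    exact ⟨hkSp, A, B, by rw [hAD]; exact hkblocks, hdetA⟩
  · rintro ⟨hkSp, A, B, hkeq, hdetA⟩
    have hDdet : (Aᵀ⁻¹).det = 1 := by
      rw [Matrix.det_nonsing_inv, Matrix.det_transpose, hdetA, Ring.inverse_one]
    have hrow : (fun i => g (Sum.inr i)) = fun i => ∑ l, Aᵀ⁻¹ i l • h (Sum.inr l) := by
      funext i j
      have hg' : g (Sum.inr i) j = (g * h⁻¹ * h) (Sum.inr i) j := by rw [hkh]
      rw [hg', Matrix.mul_apply, Fintype.sum_sum_type]
      simp [hkeq, Finset.sum_apply]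
    rw [Pl, Pl, hrow, AlternatingMap.map_matrix_smul (ExteriorAlgebra.ιMulti F n) (Aᵀ⁻¹)
      (fun l => h (Sum.inr l)), hDdet, one_smul]
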